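/- arXiv:2205.13316 — 4 statements merged into one kernel-verified Lean document; each statement's English description precedes it below -/
import Mathlib

section
/- Let μ₀ and μ₁ be probability measures on ({-1,1}) × ({-1,1}) recording the joint distribution of (Ŷ, Y) for two sub-groups, with μᵢ(Ŷ = t) > 0 for every t ∈ {-1,1} and i ∈ {0,1}. If μ₀(Y = y) ≠ μ₁(Y = y) for some y ∈ {-1,1} (different label distributions in the sub-groups), then the Independence rule and the Sufficiency rule cannot both hold: it is not the case that both μ₀(Ŷ = t) = μ₁(Ŷ = t) for all t and μ₀(Y = y | Ŷ = t) = μ₁(Y = y | Ŷ = t) for all y, t. -/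
open MeasureTheory

/-- The two-element type `{-1, 1} ⊆ ℤ` of binary labels/predictions. -/
abbrev Two : Type := ({-1, 1} : Set ℤ)

lemma two_cases (t : Two) : t = ⟨-1, by simp⟩ ∨ t = ⟨1, by simp⟩ := by
  obtain ⟨v, hv⟩ := t
  simp only [Set.mem_insert_iff, Set.mem_singleton_iff] at hv
  rcases hv with h | h <;> simp [Subtype.ext_iff, h]

/-- If the label marginals of the two sub-groups differ, the Independence rule and the
Sufficiency rule cannot both hold. -/
theorem independence_and_sufficiency_not_both
    (μ₀ μ₁ : Measure (Two × Two))
    [IsProbabilityMeasure μ₀] [IsProbabilityMeasure μ₁]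
    (hpos₀ : ∀ t : Two, 0 < μ₀ {p : Two × Two | p.1 = t})
    (hpos₁ : ∀ t : Two, 0 < μ₁ {p : Two × Two | p.1 = t})
    -- different label distributions: μ₀(Y = y) ≠ μ₁(Y = y) for some y
    (hdiff : ∃ y : Two, μ₀ {p : Two × Two | p.2 = y} ≠ μ₁ {p : Two × Two | p.2 = y}) :
    ¬ ((∀ t : Two, μ₀ {p : Two × Two | p.1 = t} = μ₁ {p : Two × Two | p.1 = t})
      ∧ (∀ y t : Two,
          μ₀ {p : Two × Two | p.1 = t ∧ p.2 = y} / μ₀ {p : Two × Two | p.1 = t}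
            = μ₁ {p : Two × Two | p.1 = t ∧ p.2 = y} / μ₁ {p : Two × Two | p.1 = t})) := by
  rintro ⟨hind, hsuf⟩
  obtain ⟨y, hy⟩ := hdiff
  apply hy
  -- pieces are equal
  have hpiece : ∀ t : Two, μ₀ {p : Two × Two | p.1 = t ∧ p.2 = y}
      = μ₁ {p : Two × Two | p.1 = t ∧ p.2 = y} := by
    intro t
    have h0 : μ₀ {p : Two × Two | p.1 = t} ≠ 0 := (hpos₀ t).ne'
    have h1 : μ₁ {p : Two × Two | p.1 = t} ≠ 0 := (hpos₁ t).ne'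
    have h0' : μ₀ {p : Two × Two | p.1 = t} ≠ ⊤ := measure_ne_top _ _
    have h1' : μ₁ {p : Two × Two | p.1 = t} ≠ ⊤ := measure_ne_top _ _
    calc μ₀ {p : Two × Two | p.1 = t ∧ p.2 = y}
        = μ₀ {p : Two × Two | p.1 = t ∧ p.2 = y} / μ₀ {p : Two × Two | p.1 = t}
            * μ₀ {p : Two × Two | p.1 = t} := (ENNReal.div_mul_cancel h0 h0').symm
      _ = μ₁ {p : Two × Two | p.1 = t ∧ p.2 = y} / μ₁ {p : Two × Two | p.1 = t}
            * μ₁ {p : Two × Two | p.1 = t} := by rw [hsuf y t, hind t]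
      _ = μ₁ {p : Two × Two | p.1 = t ∧ p.2 = y} := ENNReal.div_mul_cancel h1 h1'
  -- decompose marginal
  have hmeas : ∀ (s : Set (Two × Two)), MeasurableSet s := fun s =>
    s.to_countable.measurableSet
  have hdecomp : ∀ (μ : Measure (Two × Two)),
      μ {p : Two × Two | p.2 = y}
        = μ {p : Two × Two | p.1 = (⟨-1, by simp⟩ : Two) ∧ p.2 = y}
          + μ {p : Two × Two | p.1 = (⟨1, by simp⟩ : Two) ∧ p.2 = y} := by
    intro μ
    rw [← measure_union ?_ (hmeas _)]
    · congr 1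
      ext p
      simp only [Set.mem_setOf_eq, Set.mem_union]
      constructor
      · intro hp
        rcases two_cases p.1 with h | h
        · exact Or.inl ⟨h, hp⟩
        · exact Or.inr ⟨h, hp⟩
      · rintro (⟨_, hp⟩ | ⟨_, hp⟩) <;> exact hp
    · apply Set.disjoint_left.mpr
      rintro p ⟨h1, -⟩ ⟨h2, -⟩
      rw [h1] at h2
      exact absurd (congrArg Subtype.val h2) (by norm_num)
  rw [hdecomp μ₀, hdecomp μ₁, hpiece, hpiece]
end

section
/- Let μ₀ and μ₁ be probability measures on ({-1,1}) × ({-1,1}) recording the joint distribution of (Ŷ, Y) for two sub-groups, and assume every atom has positive probability: μᵢ(Ŷ = t, Y = y) > 0 for all t, y ∈ {-1,1} and i ∈ {0,1}. If both the Sufficiency rule (μ₀(Y = y | Ŷ = t) = μ₁(Y = y | Ŷ = t) for all y, t) and the Separation rule (μ₀(Ŷ = t | Y = y) = μ₁(Ŷ = t | Y = y) for all t, y) hold, then the label marginals coincide: μ₀(Y = y) = μ₁(Y = y) for all y. Equivalently, if μ₀(Y = y) ≠ μ₁(Y = y) for some y, the Sufficiency and Separation rules cannot both hold. -/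
open MeasureTheory

/-- If every atom of the joint distribution of `(Ŷ, Y)` has positive probability under both
sub-group measures, and both the Sufficiency rule and the Separation rule hold, then the
label marginals of the two sub-groups coincide. -/
theorem sufficiency_and_separation_imply_equal_label_marginals
    (μ₀ μ₁ : Measure (Two × Two))
    [IsProbabilityMeasure μ₀] [IsProbabilityMeasure μ₁]
    (hpos₀ : ∀ t y : Two, 0 < μ₀ {p : Two × Two | p.1 = t ∧ p.2 = y})
    (hpos₁ : ∀ t y : Two, 0 < μ₁ {p : Two × Two | p.1 = t ∧ p.2 = y})
    -- Sufficiency rule: μ₀(Y = y | Ŷ = t) = μ₁(Y = y | Ŷ = t) for all y, t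
    (hsuf : ∀ y t : Two,
      μ₀ {p : Two × Two | p.1 = t ∧ p.2 = y} / μ₀ {p : Two × Two | p.1 = t}
        = μ₁ {p : Two × Two | p.1 = t ∧ p.2 = y} / μ₁ {p : Two × Two | p.1 = t})
    -- Separation rule: μ₀(Ŷ = t | Y = y) = μ₁(Ŷ = t | Y = y) for all t, y
    (hsep : ∀ t y : Two,
      μ₀ {p : Two × Two | p.1 = t ∧ p.2 = y} / μ₀ {p : Two × Two | p.2 = y}
        = μ₁ {p : Two × Two | p.1 = t ∧ p.2 = y} / μ₁ {p : Two × Two | p.2 = y}) :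
    ∀ y : Two, μ₀ {p : Two × Two | p.2 = y} = μ₁ {p : Two × Two | p.2 = y} := by
  have hm : ∀ s : Set (Two × Two), MeasurableSet s := fun s => s.to_countable.measurableSet
  have hen : ((-1 : ℤ) ∈ ({-1, 1} : Set ℤ)) := by simp
  have hep : ((1 : ℤ) ∈ ({-1, 1} : Set ℤ)) := by simp
  set en : Two := ⟨-1, hen⟩ with hen'
  set ep : Two := ⟨1, hep⟩ with hep'
  have hcases : ∀ z : Two, z = en ∨ z = ep := by
    rintro ⟨z, hz⟩
    simp only [Set.mem_insert_iff, Set.mem_singleton_iff] at hz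
    rcases hz with h | h
    · left; exact Subtype.ext h
    · right; exact Subtype.ext h
  have hne : en ≠ ep := by
    intro h
    have := congrArg Subtype.val h
    norm_num at this
  -- row / column decompositions
  have hrow : ∀ (μ : Measure (Two × Two)) (t : Two),
      μ {p : Two × Two | p.1 = t} =
        μ {p : Two × Two | p.1 = t ∧ p.2 = en} + μ {p : Two × Two | p.1 = t ∧ p.2 = ep} := by
    intro μ t
    rw [← measure_union (Set.disjoint_left.mpr (fun p hp hq => hne (hp.2.symm.trans hq.2))) (hm _)]
    congr 1
    ext p
    constructor
    · intro h
      rcases hcases p.2 with h2 | h2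
      · exact Or.inl ⟨h, h2⟩
      · exact Or.inr ⟨h, h2⟩
    · rintro (⟨h, _⟩ | ⟨h, _⟩) <;> exact h
  have hcol : ∀ (μ : Measure (Two × Two)) (y : Two),
      μ {p : Two × Two | p.2 = y} =
        μ {p : Two × Two | p.1 = en ∧ p.2 = y} + μ {p : Two × Two | p.1 = ep ∧ p.2 = y} := by
    intro μ y
    rw [← measure_union (Set.disjoint_left.mpr (fun p hp hq => hne (hp.1.symm.trans hq.1))) (hm _)]
    congr 1
    ext p
    constructor
    · intro h
      rcases hcases p.1 with h1 | h1
      · exact Or.inl ⟨h1, h⟩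
      · exact Or.inr ⟨h1, h⟩
    · rintro (⟨_, h⟩ | ⟨_, h⟩) <;> exact h
  have htot : ∀ (μ : Measure (Two × Two)) [IsProbabilityMeasure μ],
      μ {p : Two × Two | p.1 = en} + μ {p : Two × Two | p.1 = ep} = 1 := by
    intro μ _
    rw [← measure_union (Set.disjoint_left.mpr (fun p hp hq => hne (hp.symm.trans hq))) (hm _)]
    rw [← measure_univ (μ := μ)]
    congr 1
    ext p
    simp only [Set.mem_univ, iff_true, Set.mem_union, Set.mem_setOf_eq]
    exact hcases p.1
  -- real-valued atoms
  set a : Two → Two → ℝ := fun t y => (μ₀ {p : Two × Two | p.1 = t ∧ p.2 = y}).toReal with ha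
  set b : Two → Two → ℝ := fun t y => (μ₁ {p : Two × Two | p.1 = t ∧ p.2 = y}).toReal with hb
  have hap : ∀ t y, 0 < a t y := fun t y =>
    ENNReal.toReal_pos (hpos₀ t y).ne' (measure_ne_top _ _)
  have hbp : ∀ t y, 0 < b t y := fun t y =>
    ENNReal.toReal_pos (hpos₁ t y).ne' (measure_ne_top _ _)
  -- cross-multiplied sufficiency
  have key : ∀ t : Two, a t en * b t ep = b t en * a t ep := by
    intro t
    have H := congrArg ENNReal.toReal (hsuf en t)
    rw [ENNReal.toReal_div, ENNReal.toReal_div, hrow μ₀ t, hrow μ₁ t,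
      ENNReal.toReal_add (measure_ne_top _ _) (measure_ne_top _ _),
      ENNReal.toReal_add (measure_ne_top _ _) (measure_ne_top _ _)] at H
    have h1 := hap t en; have h2 := hap t ep; have h3 := hbp t en; have h4 := hbp t ep
    rw [div_eq_div_iff (by positivity) (by positivity)] at H
    nlinarith [H]
  -- cross-multiplied separation
  have key' : ∀ y : Two, a en y * b ep y = b en y * a ep y := by
    intro y
    have H := congrArg ENNReal.toReal (hsep en y)
    rw [ENNReal.toReal_div, ENNReal.toReal_div, hcol μ₀ y, hcol μ₁ y,
      ENNReal.toReal_add (measure_ne_top _ _) (measure_ne_top _ _),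
      ENNReal.toReal_add (measure_ne_top _ _) (measure_ne_top _ _)] at H
    have h1 := hap en y; have h2 := hap ep y; have h3 := hbp en y; have h4 := hbp ep y
    rw [div_eq_div_iff (by positivity) (by positivity)] at H
    nlinarith [H]
  -- totals
  have hsum₀ : a en en + a en ep + (a ep en + a ep ep) = 1 := by
    have H := congrArg ENNReal.toReal (htot μ₀)
    rw [ENNReal.toReal_add (measure_ne_top _ _) (measure_ne_top _ _), hrow μ₀ en, hrow μ₀ ep,
      ENNReal.toReal_add (measure_ne_top _ _) (measure_ne_top _ _),
      ENNReal.toReal_add (measure_ne_top _ _) (measure_ne_top _ _)] at H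
    simpa using H
  have hsum₁ : b en en + b en ep + (b ep en + b ep ep) = 1 := by
    have H := congrArg ENNReal.toReal (htot μ₁)
    rw [ENNReal.toReal_add (measure_ne_top _ _) (measure_ne_top _ _), hrow μ₁ en, hrow μ₁ ep,
      ENNReal.toReal_add (measure_ne_top _ _) (measure_ne_top _ _),
      ENNReal.toReal_add (measure_ne_top _ _) (measure_ne_top _ _)] at H
    simpa using H
  -- derive b = a atomwise
  set c : ℝ := b en en / a en en with hc
  have h12' : b en ep * a en en = b en en * a en ep := by linear_combination key en
  have hba : ∀ t y, b t y = c * a t y := by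
    have h11 : b en en = c * a en en := by
      rw [hc, div_mul_cancel₀ _ (hap en en).ne']
    have h12 : b en ep = c * a en ep := by
      rw [hc, div_mul_eq_mul_div, eq_div_iff (hap en en).ne']
      linear_combination h12'
    have h21 : b ep en = c * a ep en := by
      rw [hc, div_mul_eq_mul_div, eq_div_iff (hap en en).ne']
      linear_combination key' en
    have h22 : b ep ep = c * a ep ep := by
      rw [hc, div_mul_eq_mul_div, eq_div_iff (hap en en).ne']
      have hk := key' ep
      have : a en ep * (b ep ep * a en en) = a en ep * (b en en * a ep ep) := by
        linear_combination a en en * hk + a ep ep * h12'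
      exact mul_left_cancel₀ (hap en ep).ne' this
    intro t y
    rcases hcases t with ht | ht <;> rcases hcases y with hy | hy <;> subst ht <;> subst hy
    · exact h11
    · exact h12
    · exact h21
    · exact h22
  have hc1 : c = 1 := by
    have := hsum₁
    rw [hba en en, hba en ep, hba ep en, hba ep ep] at this
    nlinarith [hsum₀, this]
  have hatom : ∀ t y, μ₀ {p : Two × Two | p.1 = t ∧ p.2 = y}
      = μ₁ {p : Two × Two | p.1 = t ∧ p.2 = y} := by
    intro t y
    have : a t y = b t y := by rw [hba t y, hc1]; ring
    exact ((ENNReal.toReal_eq_toReal_iff' (measure_ne_top _ _) (measure_ne_top _ _)).mp this.symm).symm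
  intro y
  rw [hcol μ₀ y, hcol μ₁ y, hatom, hatom]
end

section
/- Let L₀, L₁ : ℝⁿ × ℝᵐ → ℝ be twice continuously differentiable, fix λ ∈ ℝᵐ, κ > 0, ε ≥ 0, δ ≥ 0, and constants L₁ˡⁱᵖ, L₂ˡⁱᵖ, A₋₁, φ, A_sup, G ≥ 0. Assume: (i) for i ∈ {0,1}, the first-order partial derivatives of Lᵢ are L₁ˡⁱᵖ-Lipschitz and the second-order derivatives of Lᵢ are L₂ˡⁱᵖ-Lipschitz in (h, λ); (ii) there are points h₀*, h₁* ∈ ℝⁿ with ∇_h L₀(h₀*, λ) = 0 and ∇_h L₁(h₁*, λ) = 0, and points h₀^ε, h₁^ε ∈ ℝⁿ with ‖hᵢ* − hᵢ^ε‖ ≤ ε; (iii) the partial Hessians ∇²_h L₀ and ∇²_h L₁ at each of the points (h₀*, λ), (h₁*, λ), (h₀^ε, λ), (h₁^ε, λ) are invertible with inverse operator norm at most A₋₁; (iv) ‖hᵢ*‖ ≤ φ and ‖hᵢ^ε‖ ≤ φ for i ∈ {0,1}; (v) the mixed second derivatives satisfy ‖∇_λ∇_h Lᵢ‖ ≤ A_sup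 at each of these points; (vi) ‖∇_h Lᵢ(hᵢ^ε, λ)‖ ≤ G for i ∈ {0,1}. Define the inverse-Hessian-vector products p₀* = (∇²_h L₀(h₀*, λ))⁻¹(∇_h L₀(h₀*, λ) + κ(h₀* − h₁*)), p₁* = (∇²_h L₁(h₁*, λ))⁻¹(∇_h L₁(h₁*, λ) − κ(h₀* − h₁*)), p₀ = (∇²_h L₀(h₀^ε, λ))⁻¹(∇_h L₀(h₀^ε, λ) + κ(h₀^ε − h₁^ε)), p₁ = (∇²_h L₁(h₁^ε, λ))⁻¹(∇_h L₁(h₁^ε, λ) − κ(h₀^ε − h₁^ε)), and let p₀^δ, p₁^δ ∈ ℝⁿ satisfy ‖pᵢ − pᵢ^δ‖ ≤ δ. Define grad(λ) = ∇_λ L₀(h₀*, λ) + ∇_λ L₁(h₁*, λ) − (∇_λ∇_h L₀(h₀*, λ))ᵀ p₀* − (∇_λ∇_h L₁(h₁*, λ))ᵀ p₁* and grad^δ(λ) = ∇_λ L₀(h₀^ε, λ) + ∇_λ L₁(h₁^ε, λ) − (∇_λ∇_h L₀(h₀^ε, λ))ᵀ p₀^δ − (∇_λ∇_h L₁(h₁^ε,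 λ))ᵀ p₁^δ. Then there exists a constant K₀ ≥ 0, depending only on L₁ˡⁱᵖ, L₂ˡⁱᵖ, A₋₁, φ, A_sup, G (and not on ε, δ, κ, or λ), such that ‖grad(λ) − grad^δ(λ)‖ ≤ K₀ (κ ε + ε + δ). -/
noncomputable section

/-- Partial gradient of `L(h, λ)` in the predictor argument `h`. -/
def gradH {n m : ℕ} (L : EuclideanSpace ℝ (Fin n) × EuclideanSpace ℝ (Fin m) → ℝ)
    (h : EuclideanSpace ℝ (Fin n)) (l : EuclideanSpace ℝ (Fin m)) :
    EuclideanSpace ℝ (Fin n) :=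
  gradient (fun h' => L (h', l)) h

/-- Partial gradient of `L(h, λ)` in the representation argument `λ`. -/
def gradL {n m : ℕ} (L : EuclideanSpace ℝ (Fin n) × EuclideanSpace ℝ (Fin m) → ℝ)
    (h : EuclideanSpace ℝ (Fin n)) (l : EuclideanSpace ℝ (Fin m)) :
    EuclideanSpace ℝ (Fin m) :=
  gradient (fun l' => L (h, l')) l

/-- Partial Hessian `∇²_{hh} L(h, λ)` of `L` in `h`, as a continuous linear map. -/
def hessH {n m : ℕ} (L : EuclideanSpace ℝ (Fin n) × EuclideanSpace ℝ (Fin m) → ℝ)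
    (h : EuclideanSpace ℝ (Fin n)) (l : EuclideanSpace ℝ (Fin m)) :
    EuclideanSpace ℝ (Fin n) →L[ℝ] EuclideanSpace ℝ (Fin n) :=
  fderiv ℝ (fun h' => gradH L h' l) h

/-- Mixed second derivative `∇_λ ∇_h L(h, λ)`, as a linear map `ℝᵐ → ℝⁿ`. -/
def mixedLH {n m : ℕ} (L : EuclideanSpace ℝ (Fin n) × EuclideanSpace ℝ (Fin m) → ℝ)
    (h : EuclideanSpace ℝ (Fin n)) (l : EuclideanSpace ℝ (Fin m)) :
    EuclideanSpace ℝ (Fin m) →L[ℝ] EuclideanSpace ℝ (Fin n) :=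
  fderiv ℝ (fun l' => gradH L h l') l


lemma lip_fst' {E F b : Type*} [PseudoMetricSpace E] [PseudoMetricSpace F] [PseudoMetricSpace b]
    {c : NNReal} {f : E × F → b} (hf : LipschitzWith c f) (x y : E) (l : F) :
    dist (f (x, l)) (f (y, l)) ≤ c * dist x y := by
  have h := hf.dist_le_mul (x, l) (y, l)
  rwa [Prod.dist_eq, dist_self, max_eq_left dist_nonneg] at h

lemma ring_inverse_sub' {R : Type*} [Ring R] {a b : R} (ha : IsUnit a) (hb : IsUnit b) :
    Ring.inverse a - Ring.inverse b = Ring.inverse a * (b - a) * Ring.inverse b := by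
  rw [mul_sub, sub_mul, mul_assoc (Ring.inverse a) b (Ring.inverse b),
    Ring.mul_inverse_cancel b hb, Ring.inverse_mul_cancel a ha, mul_one, one_mul]

lemma key_bound {n m : ℕ} {Ainv Asup L1e L2e ε δ κ G phi : ℝ}
    (hAinv : 0 ≤ Ainv) (hAsup : 0 ≤ Asup) (hL1e : 0 ≤ L1e) (hL2e : 0 ≤ L2e)
    (hε : 0 ≤ ε) (hδ : 0 ≤ δ) (hκ : 0 ≤ κ) (hG : 0 ≤ G) (hphi : 0 ≤ phi)
    (Hs He : EuclideanSpace ℝ (Fin n) →L[ℝ] EuclideanSpace ℝ (Fin n))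
    (hUs : IsUnit Hs) (hUe : IsUnit He)
    (hIs : ‖Ring.inverse Hs‖ ≤ Ainv) (hIe : ‖Ring.inverse He‖ ≤ Ainv)
    (hHd : ‖Hs - He‖ ≤ L2e * ε)
    (g : EuclideanSpace ℝ (Fin n)) (hgL : ‖g‖ ≤ L1e * ε) (hgG : ‖g‖ ≤ G)
    (s e : EuclideanSpace ℝ (Fin n)) (hse : ‖s - e‖ ≤ 2 * ε)
    (hsn : ‖s‖ ≤ 2 * phi) (hen : ‖e‖ ≤ 2 * phi)
    (As Ae : EuclideanSpace ℝ (Fin m) →L[ℝ] EuclideanSpace ℝ (Fin n))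
    (hAd : ‖As - Ae‖ ≤ L2e * ε) (hAe : ‖Ae‖ ≤ Asup)
    (pd : EuclideanSpace ℝ (Fin n))
    (hp : ‖Ring.inverse He (g + κ • e) - pd‖ ≤ δ) :
    ‖(ContinuousLinearMap.adjoint As) (Ring.inverse Hs (κ • s))
      - (ContinuousLinearMap.adjoint Ae) pd‖
      ≤ (L2e * Ainv * (2 * phi) + Asup * (2 * Ainv) + Asup * (Ainv ^ 2 * L2e * (2 * phi)))
          * (κ * ε)
        + (Asup * (Ainv * L1e) + Asup * (Ainv ^ 2 * L2e * G)) * ε + Asup * δ := by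
  set u := Ring.inverse Hs (κ • s) with hu_def
  set w := g + κ • e with hw_def
  -- norm of u
  have hκs : ‖κ • s‖ ≤ κ * (2 * phi) := by
    rw [norm_smul, Real.norm_eq_abs, abs_of_nonneg hκ]
    exact mul_le_mul_of_nonneg_left hsn hκ
  have hu : ‖u‖ ≤ Ainv * (κ * (2 * phi)) := by
    calc ‖u‖ ≤ ‖Ring.inverse Hs‖ * ‖κ • s‖ := (Ring.inverse Hs).le_opNorm _
    _ ≤ Ainv * (κ * (2 * phi)) :=
        mul_le_mul hIs hκs (norm_nonneg _) hAinv
  -- norm of w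
  have hw : ‖w‖ ≤ G + κ * (2 * phi) := by
    calc ‖w‖ ≤ ‖g‖ + ‖κ • e‖ := norm_add_le _ _
    _ ≤ G + κ * (2 * phi) := by
        refine add_le_add hgG ?_
        rw [norm_smul, Real.norm_eq_abs, abs_of_nonneg hκ]
        exact mul_le_mul_of_nonneg_left hen hκ
  -- inverse difference
  have hinv : ‖Ring.inverse Hs - Ring.inverse He‖ ≤ Ainv * (L2e * ε) * Ainv := by
    rw [ring_inverse_sub' hUs hUe]
    calc ‖Ring.inverse Hs * (He - Hs) * Ring.inverse He‖
        ≤ ‖Ring.inverse Hs * (He - Hs)‖ * ‖Ring.inverse He‖ := norm_mul_le _ _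
      _ ≤ ‖Ring.inverse Hs‖ * ‖He - Hs‖ * ‖Ring.inverse He‖ :=
          mul_le_mul_of_nonneg_right (norm_mul_le _ _) (norm_nonneg _)
      _ ≤ Ainv * (L2e * ε) * Ainv := by
          refine mul_le_mul (mul_le_mul hIs ?_ (norm_nonneg _) hAinv) hIe (norm_nonneg _)
            (mul_nonneg hAinv (mul_nonneg hL2e hε))
          rwa [norm_sub_rev]
  -- ‖κ•s - w‖
  have hv : ‖κ • s - w‖ ≤ κ * (2 * ε) + L1e * ε := by
    have heq : κ • s - w = κ • (s - e) - g := by rw [hw_def, smul_sub]; abel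
    rw [heq]
    calc ‖κ • (s - e) - g‖ ≤ ‖κ • (s - e)‖ + ‖g‖ := norm_sub_le _ _
    _ ≤ κ * (2 * ε) + L1e * ε := by
        refine add_le_add ?_ hgL
        rw [norm_smul, Real.norm_eq_abs, abs_of_nonneg hκ]
        exact mul_le_mul_of_nonneg_left hse hκ
  -- ‖u - pd‖
  have hupd : ‖u - pd‖ ≤ Ainv * (κ * (2 * ε) + L1e * ε)
      + Ainv * (L2e * ε) * Ainv * (G + κ * (2 * phi)) + δ := by
    have hsplit : u - pd = Ring.inverse Hs (κ • s - w)
        + (Ring.inverse Hs - Ring.inverse He) w + (Ring.inverse He w - pd) := by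
      simp only [map_sub, ContinuousLinearMap.sub_apply, hu_def]
      abel
    rw [hsplit]
    refine le_trans (norm_add_le _ _) (add_le_add (le_trans (norm_add_le _ _)
      (add_le_add ?_ ?_)) hp)
    · calc ‖Ring.inverse Hs (κ • s - w)‖ ≤ ‖Ring.inverse Hs‖ * ‖κ • s - w‖ :=
          (Ring.inverse Hs).le_opNorm _
      _ ≤ Ainv * (κ * (2 * ε) + L1e * ε) :=
          mul_le_mul hIs hv (norm_nonneg _) hAinv
    · calc ‖(Ring.inverse Hs - Ring.inverse He) w‖
          ≤ ‖Ring.inverse Hs - Ring.inverse He‖ * ‖w‖ :=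
            (Ring.inverse Hs - Ring.inverse He).le_opNorm _
      _ ≤ Ainv * (L2e * ε) * Ainv * (G + κ * (2 * phi)) :=
          mul_le_mul hinv hw (norm_nonneg _)
            (mul_nonneg (mul_nonneg hAinv (mul_nonneg hL2e hε)) hAinv)
  -- main split
  have hmain : (ContinuousLinearMap.adjoint As) u - (ContinuousLinearMap.adjoint Ae) pd
      = (ContinuousLinearMap.adjoint (As - Ae)) u
        + (ContinuousLinearMap.adjoint Ae) (u - pd) := by
    simp only [map_sub, ContinuousLinearMap.sub_apply]
    abel
  rw [hmain]
  calc ‖(ContinuousLinearMap.adjoint (As - Ae)) u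
        + (ContinuousLinearMap.adjoint Ae) (u - pd)‖
      ≤ ‖(ContinuousLinearMap.adjoint (As - Ae)) u‖
        + ‖(ContinuousLinearMap.adjoint Ae) (u - pd)‖ := norm_add_le _ _
    _ ≤ ‖As - Ae‖ * ‖u‖ + ‖Ae‖ * ‖u - pd‖ := by
        refine add_le_add ?_ ?_
        · calc ‖(ContinuousLinearMap.adjoint (As - Ae)) u‖
              ≤ ‖ContinuousLinearMap.adjoint (As - Ae)‖ * ‖u‖ :=
                ContinuousLinearMap.le_opNorm _ _
          _ = ‖As - Ae‖ * ‖u‖ := by rw [LinearIsometryEquiv.norm_map]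
        · calc ‖(ContinuousLinearMap.adjoint Ae) (u - pd)‖
              ≤ ‖ContinuousLinearMap.adjoint Ae‖ * ‖u - pd‖ :=
                ContinuousLinearMap.le_opNorm _ _
          _ = ‖Ae‖ * ‖u - pd‖ := by rw [LinearIsometryEquiv.norm_map]
    _ ≤ (L2e * ε) * (Ainv * (κ * (2 * phi)))
        + Asup * (Ainv * (κ * (2 * ε) + L1e * ε)
          + Ainv * (L2e * ε) * Ainv * (G + κ * (2 * phi)) + δ) := by
        refine add_le_add
          (mul_le_mul hAd hu (norm_nonneg _) (mul_nonneg hL2e hε))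
          (mul_le_mul hAe hupd (norm_nonneg _) hAsup)
    _ = (L2e * Ainv * (2 * phi) + Asup * (2 * Ainv) + Asup * (Ainv ^ 2 * L2e * (2 * phi)))
          * (κ * ε)
        + (Asup * (Ainv * L1e) + Asup * (Ainv ^ 2 * L2e * G)) * ε + Asup * δ := by ring

lemma sum_le_combined (c0 c1 c2 c3 x y z : ℝ) (h0 : 0 ≤ c0) (h1 : 0 ≤ c1)
    (h2 : 0 ≤ c2) (h3 : 0 ≤ c3) (hx : 0 ≤ x) (hy : 0 ≤ y) (hz : 0 ≤ z) :
    c0 * y + c0 * y + ((c1 * x + c2 * y + c3 * z) + (c1 * x + c2 * y + c3 * z))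
      ≤ (2 * c0 + 2 * (c1 + c2 + c3)) * (x + y + z) := by
  nlinarith [mul_nonneg h0 hx, mul_nonneg h0 hz, mul_nonneg h1 hy, mul_nonneg h1 hz,
    mul_nonneg h2 hx, mul_nonneg h2 hz, mul_nonneg h3 hx, mul_nonneg h3 hy]

/-- **Approximation Error Gap** (Theorem 4.1): the error between the ground-truth implicit
gradient of the outer objective and its algorithmic estimate (computed from `ε`-approximate
inner solutions and `δ`-approximate inverse-Hessian–vector products) is bounded by
`K₀ (κ ε + ε + δ)`, where `K₀` depends only on the Lipschitz constants, the inverse-Hessian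
norm bound, the predictor norm bound, the mixed-derivative bound, and the gradient bound. -/
theorem approximation_error_gap
    (L1lip L2lip Ainv phi Asup G : ℝ)
    (hL1 : 0 ≤ L1lip) (hL2 : 0 ≤ L2lip) (hAinv : 0 ≤ Ainv)
    (hphi : 0 ≤ phi) (hAsup : 0 ≤ Asup) (hG : 0 ≤ G) :
    ∃ K₀ : ℝ, 0 ≤ K₀ ∧
      ∀ (n m : ℕ)
        (L : Fin 2 → (EuclideanSpace ℝ (Fin n) × EuclideanSpace ℝ (Fin m) → ℝ))
        (_hC2 : ∀ i, ContDiff ℝ 2 (L i))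
        (lam : EuclideanSpace ℝ (Fin m)) (κ ε δ : ℝ)
        (_hκ : 0 < κ) (_hε : 0 ≤ ε) (_hδ : 0 ≤ δ)
        (hs he : Fin 2 → EuclideanSpace ℝ (Fin n))    -- exact and ε-approx inner solutions
        (p₀δ p₁δ : EuclideanSpace ℝ (Fin n)),
        -- (i) Lipschitz first-order partial derivatives
        (∀ i, LipschitzWith L1lip.toNNReal
            (fun p : EuclideanSpace ℝ (Fin n) × EuclideanSpace ℝ (Fin m) =>
              gradH (L i) p.1 p.2)) →
        (∀ i, LipschitzWith L1lip.toNNReal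
            (fun p : EuclideanSpace ℝ (Fin n) × EuclideanSpace ℝ (Fin m) =>
              gradL (L i) p.1 p.2)) →
        -- (i) Lipschitz second-order derivatives in (h, λ)
        (∀ i, LipschitzWith L2lip.toNNReal
            (fun p : EuclideanSpace ℝ (Fin n) × EuclideanSpace ℝ (Fin m) =>
              hessH (L i) p.1 p.2)) →
        (∀ i, LipschitzWith L2lip.toNNReal
            (fun p : EuclideanSpace ℝ (Fin n) × EuclideanSpace ℝ (Fin m) =>
              mixedLH (L i) p.1 p.2)) →
        -- (ii) stationary exact inner solutions and ε-approximate inner solutions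
        (∀ i, gradH (L i) (hs i) lam = 0) →
        (∀ i, ‖hs i - he i‖ ≤ ε) →
        -- (iii) invertible partial Hessians with inverse norm at most Ainv
        (∀ i, ∀ x ∈ ({hs i, he i} : Set (EuclideanSpace ℝ (Fin n))),
          IsUnit (hessH (L i) x lam) ∧ ‖Ring.inverse (hessH (L i) x lam)‖ ≤ Ainv) →
        -- (iv) bounded predictors
        (∀ i, ‖hs i‖ ≤ phi ∧ ‖he i‖ ≤ phi) →
        -- (v) bounded mixed second derivatives
        (∀ i, ∀ x ∈ ({hs i, he i} : Set (EuclideanSpace ℝ (Fin n))),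
          ‖mixedLH (L i) x lam‖ ≤ Asup) →
        -- (vi) bounded gradients at the approximate solutions
        (∀ i, ‖gradH (L i) (he i) lam‖ ≤ G) →
        -- δ-approximate inverse-Hessian–vector products
        (‖Ring.inverse (hessH (L 0) (he 0) lam)
            (gradH (L 0) (he 0) lam + κ • (he 0 - he 1)) - p₀δ‖ ≤ δ) →
        (‖Ring.inverse (hessH (L 1) (he 1) lam)
            (gradH (L 1) (he 1) lam - κ • (he 0 - he 1)) - p₁δ‖ ≤ δ) →
        -- conclusion: ‖grad(λ) - grad^δ(λ)‖ ≤ K₀ (κ ε + ε + δ)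
        ‖(gradL (L 0) (hs 0) lam + gradL (L 1) (hs 1) lam
            - (ContinuousLinearMap.adjoint (mixedLH (L 0) (hs 0) lam))
                (Ring.inverse (hessH (L 0) (hs 0) lam)
                  (gradH (L 0) (hs 0) lam + κ • (hs 0 - hs 1)))
            - (ContinuousLinearMap.adjoint (mixedLH (L 1) (hs 1) lam))
                (Ring.inverse (hessH (L 1) (hs 1) lam)
                  (gradH (L 1) (hs 1) lam - κ • (hs 0 - hs 1))))
          - (gradL (L 0) (he 0) lam + gradL (L 1) (he 1) lam
            - (ContinuousLinearMap.adjoint (mixedLH (L 0) (he 0) lam)) p₀δ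
            - (ContinuousLinearMap.adjoint (mixedLH (L 1) (he 1) lam)) p₁δ)‖
          ≤ K₀ * (κ * ε + ε + δ) := by
  classical
  have hL1' : (0:ℝ) ≤ (L1lip.toNNReal : ℝ) := NNReal.coe_nonneg _
  have hL2' : (0:ℝ) ≤ (L2lip.toNNReal : ℝ) := NNReal.coe_nonneg _
  refine ⟨2 * (L1lip.toNNReal : ℝ)
      + 2 * (((L2lip.toNNReal : ℝ) * Ainv * (2 * phi) + Asup * (2 * Ainv)
            + Asup * (Ainv ^ 2 * (L2lip.toNNReal : ℝ) * (2 * phi)))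
          + (Asup * (Ainv * (L1lip.toNNReal : ℝ))
            + Asup * (Ainv ^ 2 * (L2lip.toNNReal : ℝ) * G)) + Asup), ?_, ?_⟩
  · have h2phi : (0:ℝ) ≤ 2 * phi := mul_nonneg (by norm_num) hphi
    have hA2 : (0:ℝ) ≤ Ainv ^ 2 := pow_nonneg hAinv 2
    have t1 : (0:ℝ) ≤ (L2lip.toNNReal : ℝ) * Ainv * (2 * phi) :=
      mul_nonneg (mul_nonneg hL2' hAinv) h2phi
    have t2 : (0:ℝ) ≤ Asup * (2 * Ainv) :=
      mul_nonneg hAsup (mul_nonneg (by norm_num) hAinv)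
    have t3 : (0:ℝ) ≤ Asup * (Ainv ^ 2 * (L2lip.toNNReal : ℝ) * (2 * phi)) :=
      mul_nonneg hAsup (mul_nonneg (mul_nonneg hA2 hL2') h2phi)
    have t4 : (0:ℝ) ≤ Asup * (Ainv * (L1lip.toNNReal : ℝ)) :=
      mul_nonneg hAsup (mul_nonneg hAinv hL1')
    have t5 : (0:ℝ) ≤ Asup * (Ainv ^ 2 * (L2lip.toNNReal : ℝ) * G) :=
      mul_nonneg hAsup (mul_nonneg (mul_nonneg hA2 hL2') hG)
    linarith
  intro n m L _hC2 lam k e d hk he' hd hs hee p0d p1d hLipGH hLipGL hLipHess hLipMix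
    hstat happrox hHessInv hbnd hmixb hgb hp0 hp1
  have hknn : (0:ℝ) ≤ k := le_of_lt hk
  -- Lipschitz norm bounds
  have lipGH : ∀ i a b, ‖gradH (L i) a lam - gradH (L i) b lam‖
      ≤ (L1lip.toNNReal : ℝ) * ‖a - b‖ := by
    intro i a b
    have h := lip_fst' (hLipGH i) a b lam
    rwa [dist_eq_norm, dist_eq_norm] at h
  have lipGL : ∀ i a b, ‖gradL (L i) a lam - gradL (L i) b lam‖
      ≤ (L1lip.toNNReal : ℝ) * ‖a - b‖ := by
    intro i a b
    have h := lip_fst' (hLipGL i) a b lam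
    rwa [dist_eq_norm, dist_eq_norm] at h
  have lipHess : ∀ i a b, ‖hessH (L i) a lam - hessH (L i) b lam‖
      ≤ (L2lip.toNNReal : ℝ) * ‖a - b‖ := by
    intro i a b
    have h := lip_fst' (hLipHess i) a b lam
    rwa [dist_eq_norm, dist_eq_norm] at h
  have lipMix : ∀ i a b, ‖mixedLH (L i) a lam - mixedLH (L i) b lam‖
      ≤ (L2lip.toNNReal : ℝ) * ‖a - b‖ := by
    intro i a b
    have h := lip_fst' (hLipMix i) a b lam
    rwa [dist_eq_norm, dist_eq_norm] at h
  -- Hessian facts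
  have memS : ∀ i, hs i ∈ ({hs i, hee i} : Set (EuclideanSpace ℝ (Fin n))) :=
    fun i => Set.mem_insert _ _
  have memE : ∀ i, hee i ∈ ({hs i, hee i} : Set (EuclideanSpace ℝ (Fin n))) :=
    fun i => Set.mem_insert_of_mem _ rfl
  have hUs : ∀ i, IsUnit (hessH (L i) (hs i) lam) := fun i => (hHessInv i _ (memS i)).1
  have hUe : ∀ i, IsUnit (hessH (L i) (hee i) lam) := fun i => (hHessInv i _ (memE i)).1
  have hIs : ∀ i, ‖Ring.inverse (hessH (L i) (hs i) lam)‖ ≤ Ainv :=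
    fun i => (hHessInv i _ (memS i)).2
  have hIe : ∀ i, ‖Ring.inverse (hessH (L i) (hee i) lam)‖ ≤ Ainv :=
    fun i => (hHessInv i _ (memE i)).2
  have hAeb : ∀ i, ‖mixedLH (L i) (hee i) lam‖ ≤ Asup := fun i => hmixb i _ (memE i)
  -- per-index helper bounds
  have hgbd : ∀ i, ‖gradH (L i) (hee i) lam‖ ≤ (L1lip.toNNReal : ℝ) * e := by
    intro i
    have h := lipGH i (hee i) (hs i)
    rw [hstat i, sub_zero, norm_sub_rev] at h
    exact h.trans (mul_le_mul_of_nonneg_left (happrox i) hL1')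
  have hHd : ∀ i, ‖hessH (L i) (hs i) lam - hessH (L i) (hee i) lam‖
      ≤ (L2lip.toNNReal : ℝ) * e :=
    fun i => (lipHess i _ _).trans (mul_le_mul_of_nonneg_left (happrox i) hL2')
  have hAd : ∀ i, ‖mixedLH (L i) (hs i) lam - mixedLH (L i) (hee i) lam‖
      ≤ (L2lip.toNNReal : ℝ) * e :=
    fun i => (lipMix i _ _).trans (mul_le_mul_of_nonneg_left (happrox i) hL2')
  have hse0 : ‖(hs 0 - hs 1) - (hee 0 - hee 1)‖ ≤ 2 * e := by
    have heq : (hs 0 - hs 1) - (hee 0 - hee 1) = (hs 0 - hee 0) - (hs 1 - hee 1) := by abel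
    rw [heq]
    have := norm_sub_le (hs 0 - hee 0) (hs 1 - hee 1)
    have h0 := happrox 0; have h1 := happrox 1
    linarith
  have hse1 : ‖(hs 1 - hs 0) - (hee 1 - hee 0)‖ ≤ 2 * e := by
    have heq : (hs 1 - hs 0) - (hee 1 - hee 0) = (hs 1 - hee 1) - (hs 0 - hee 0) := by abel
    rw [heq]
    have := norm_sub_le (hs 1 - hee 1) (hs 0 - hee 0)
    have h0 := happrox 0; have h1 := happrox 1
    linarith
  have hsn : ∀ i j : Fin 2, ‖hs i - hs j‖ ≤ 2 * phi := by
    intro i j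
    have := norm_sub_le (hs i) (hs j)
    have hi := (hbnd i).1; have hj := (hbnd j).1
    linarith
  have hen : ∀ i j : Fin 2, ‖hee i - hee j‖ ≤ 2 * phi := by
    intro i j
    have := norm_sub_le (hee i) (hee j)
    have hi := (hbnd i).2; have hj := (hbnd j).2
    linarith
  -- simplify the exact inverse-Hessian vectors using stationarity
  have eq0 : gradH (L 0) (hs 0) lam + k • (hs 0 - hs 1) = k • (hs 0 - hs 1) := by
    rw [hstat 0, zero_add]
  have eq1 : gradH (L 1) (hs 1) lam - k • (hs 0 - hs 1) = k • (hs 1 - hs 0) := by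
    rw [hstat 1, zero_sub, ← smul_neg, neg_sub]
  have eq2 : gradH (L 1) (hee 1) lam - k • (hee 0 - hee 1)
      = gradH (L 1) (hee 1) lam + k • (hee 1 - hee 0) := by
    rw [sub_eq_add_neg, ← smul_neg, neg_sub]
  rw [eq2] at hp1
  -- the two key bounds
  have B0 := key_bound hAinv hAsup hL1' hL2' he' hd hknn hG hphi
    (hessH (L 0) (hs 0) lam) (hessH (L 0) (hee 0) lam) (hUs 0) (hUe 0) (hIs 0) (hIe 0)
    (hHd 0) (gradH (L 0) (hee 0) lam) (hgbd 0) (hgb 0)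
    (hs 0 - hs 1) (hee 0 - hee 1) hse0 (hsn 0 1) (hen 0 1)
    (mixedLH (L 0) (hs 0) lam) (mixedLH (L 0) (hee 0) lam) (hAd 0) (hAeb 0) p0d hp0
  have B1 := key_bound hAinv hAsup hL1' hL2' he' hd hknn hG hphi
    (hessH (L 1) (hs 1) lam) (hessH (L 1) (hee 1) lam) (hUs 1) (hUe 1) (hIs 1) (hIe 1)
    (hHd 1) (gradH (L 1) (hee 1) lam) (hgbd 1) (hgb 1)
    (hs 1 - hs 0) (hee 1 - hee 0) hse1 (hsn 1 0) (hen 1 0)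
    (mixedLH (L 1) (hs 1) lam) (mixedLH (L 1) (hee 1) lam) (hAd 1) (hAeb 1) p1d hp1
  have D0 : ‖gradL (L 0) (hs 0) lam - gradL (L 0) (hee 0) lam‖
      ≤ (L1lip.toNNReal : ℝ) * e :=
    (lipGL 0 _ _).trans (mul_le_mul_of_nonneg_left (happrox 0) hL1')
  have D1 : ‖gradL (L 1) (hs 1) lam - gradL (L 1) (hee 1) lam‖
      ≤ (L1lip.toNNReal : ℝ) * e :=
    (lipGL 1 _ _).trans (mul_le_mul_of_nonneg_left (happrox 1) hL1')
  rw [eq0, eq1]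
  have hre : (gradL (L 0) (hs 0) lam + gradL (L 1) (hs 1) lam
        - (ContinuousLinearMap.adjoint (mixedLH (L 0) (hs 0) lam))
            (Ring.inverse (hessH (L 0) (hs 0) lam) (k • (hs 0 - hs 1)))
        - (ContinuousLinearMap.adjoint (mixedLH (L 1) (hs 1) lam))
            (Ring.inverse (hessH (L 1) (hs 1) lam) (k • (hs 1 - hs 0))))
      - (gradL (L 0) (hee 0) lam + gradL (L 1) (hee 1) lam
        - (ContinuousLinearMap.adjoint (mixedLH (L 0) (hee 0) lam)) p0d
        - (ContinuousLinearMap.adjoint (mixedLH (L 1) (hee 1) lam)) p1d)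
      = ((gradL (L 0) (hs 0) lam - gradL (L 0) (hee 0) lam)
          + (gradL (L 1) (hs 1) lam - gradL (L 1) (hee 1) lam))
        - (((ContinuousLinearMap.adjoint (mixedLH (L 0) (hs 0) lam))
              (Ring.inverse (hessH (L 0) (hs 0) lam) (k • (hs 0 - hs 1)))
            - (ContinuousLinearMap.adjoint (mixedLH (L 0) (hee 0) lam)) p0d)
          + ((ContinuousLinearMap.adjoint (mixedLH (L 1) (hs 1) lam))
              (Ring.inverse (hessH (L 1) (hs 1) lam) (k • (hs 1 - hs 0)))
            - (ContinuousLinearMap.adjoint (mixedLH (L 1) (hee 1) lam)) p1d)) := by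
    abel
  rw [hre]
  have htri := norm_sub_le
    ((gradL (L 0) (hs 0) lam - gradL (L 0) (hee 0) lam)
      + (gradL (L 1) (hs 1) lam - gradL (L 1) (hee 1) lam))
    (((ContinuousLinearMap.adjoint (mixedLH (L 0) (hs 0) lam))
        (Ring.inverse (hessH (L 0) (hs 0) lam) (k • (hs 0 - hs 1)))
      - (ContinuousLinearMap.adjoint (mixedLH (L 0) (hee 0) lam)) p0d)
    + ((ContinuousLinearMap.adjoint (mixedLH (L 1) (hs 1) lam))
        (Ring.inverse (hessH (L 1) (hs 1) lam) (k • (hs 1 - hs 0)))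
      - (ContinuousLinearMap.adjoint (mixedLH (L 1) (hee 1) lam)) p1d))
  have htri1 := norm_add_le (gradL (L 0) (hs 0) lam - gradL (L 0) (hee 0) lam)
    (gradL (L 1) (hs 1) lam - gradL (L 1) (hee 1) lam)
  have htri2 := norm_add_le
    ((ContinuousLinearMap.adjoint (mixedLH (L 0) (hs 0) lam))
        (Ring.inverse (hessH (L 0) (hs 0) lam) (k • (hs 0 - hs 1)))
      - (ContinuousLinearMap.adjoint (mixedLH (L 0) (hee 0) lam)) p0d)
    ((ContinuousLinearMap.adjoint (mixedLH (L 1) (hs 1) lam))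
        (Ring.inverse (hessH (L 1) (hs 1) lam) (k • (hs 1 - hs 0)))
      - (ContinuousLinearMap.adjoint (mixedLH (L 1) (hee 1) lam)) p1d)
  -- final arithmetic
  have hke : (0:ℝ) ≤ k * e := mul_nonneg hknn he'
  have h2phi : (0:ℝ) ≤ 2 * phi := mul_nonneg (by norm_num) hphi
  have hA2 : (0:ℝ) ≤ Ainv ^ 2 := pow_nonneg hAinv 2
  have hc1 : (0:ℝ) ≤ (L2lip.toNNReal : ℝ) * Ainv * (2 * phi) + Asup * (2 * Ainv)
      + Asup * (Ainv ^ 2 * (L2lip.toNNReal : ℝ) * (2 * phi)) :=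
    add_nonneg (add_nonneg (mul_nonneg (mul_nonneg hL2' hAinv) h2phi)
      (mul_nonneg hAsup (mul_nonneg (by norm_num) hAinv)))
      (mul_nonneg hAsup (mul_nonneg (mul_nonneg hA2 hL2') h2phi))
  have hc2 : (0:ℝ) ≤ Asup * (Ainv * (L1lip.toNNReal : ℝ))
      + Asup * (Ainv ^ 2 * (L2lip.toNNReal : ℝ) * G) :=
    add_nonneg (mul_nonneg hAsup (mul_nonneg hAinv hL1'))
      (mul_nonneg hAsup (mul_nonneg (mul_nonneg hA2 hL2') hG))
  refine le_trans (le_trans htri (add_le_add (le_trans htri1 (add_le_add D0 D1))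
    (le_trans htri2 (add_le_add B0 B1)))) ?_
  exact sum_le_combined _ _ _ _ (k * e) e d hL1' hc1 hc2 hAsup hke he' hd


end
end

section
/- Let H be a real Hilbert space, F : H → ℝ differentiable with gradient ∇F that is β-Lipschitz for some β > 0, K ⊆ H a nonempty closed convex set, x ∈ K, and g ∈ H an (inexact) gradient estimate. Let x⁺ = proj_K(x − (1/β) g) be the metric projection of x − (1/β) g onto K. Then F(x⁺) ≤ F(x) + ‖∇F(x) − g‖ · ‖x − x⁺‖ − (β/2) ‖x⁺ − x‖². -/
/-!
The descent lemma for a `β`-Lipschitz gradient gives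
`F x⁺ ≤ F x + ⟪∇F x, x⁺ - x⟫ + (β/2)‖x⁺ - x‖²`. The variational inequality of the projection,
tested at `x ∈ K`, gives `⟪g, x⁺ - x⟫ ≤ -β‖x⁺ - x‖²`, and the remaining term
`⟪∇F x - g, x⁺ - x⟫` is bounded by Cauchy–Schwarz.
-/

/-- `q` is the metric projection of `p` onto the set `K`: `q ∈ K` and `q` is a closest
point of `K` to `p`. -/
def IsProjOn {H : Type*} [NormedAddCommGroup H] (K : Set H) (p q : H) : Prop :=
  q ∈ K ∧ ∀ y ∈ K, ‖p - q‖ ≤ ‖p - y‖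

open scoped NNReal RealInnerProductSpace

section

variable {H : Type*} [NormedAddCommGroup H] [InnerProductSpace ℝ H]

theorem IsProjOn.real_inner_sub_le_zero {K : Set H} (hK : Convex ℝ K) {p q : H}
    (h : IsProjOn K p q) {w : H} (hw : w ∈ K) : ⟪p - q, w - q⟫ ≤ 0 := by
  have : Nonempty K := ⟨⟨q, h.1⟩⟩
  have hbdd : BddBelow (Set.range fun w : K => ‖p - w‖) :=
    ⟨0, by rintro _ ⟨w, rfl⟩; exact norm_nonneg _⟩
  have hmin : ‖p - q‖ = ⨅ w : K, ‖p - w‖ :=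
    le_antisymm (le_ciInf fun w => h.2 w w.2) (ciInf_le hbdd ⟨q, h.1⟩)
  exact (norm_eq_iInf_iff_real_inner_le_zero hK h.1).1 hmin w hw

theorem IsProjOn.real_inner_sub_le_neg_mul_norm_sq {K : Set H} (hK : Convex ℝ K) {β : ℝ}
    (hβ : 0 < β) {x g xp : H} (hx : x ∈ K) (h : IsProjOn K (x - (1 / β) • g) xp) :
    ⟪g, xp - x⟫ ≤ -(β * ‖xp - x‖ ^ 2) := by
  have hvar := h.real_inner_sub_le_zero hK hx
  have hexpand : ⟪x - (1 / β) • g - xp, x - xp⟫ = ‖xp - x‖ ^ 2 + (1 / β) * ⟪g, xp - x⟫ := by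
    rw [sub_right_comm, inner_sub_left, real_inner_smul_left, real_inner_self_eq_norm_sq,
      norm_sub_rev, ← neg_sub xp x, inner_neg_right]
    ring
  rw [hexpand] at hvar
  have := mul_nonpos_of_nonneg_of_nonpos hβ.le hvar
  rw [mul_add, ← mul_assoc, mul_one_div_cancel hβ.ne', one_mul] at this
  linarith

theorem HasGradientAt.hasDerivAt_add_smul [CompleteSpace H] {F : H → ℝ} {g x d : H} {t : ℝ}
    (hF : HasGradientAt F g (x + t • d)) :
    HasDerivAt (fun s : ℝ => F (x + s • d)) ⟪g, d⟫ t := by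
  have hline : HasDerivAt (fun s : ℝ => x + s • d) d t := by
    simpa using ((hasDerivAt_id t).smul_const d).const_add x
  have hcomp := hF.hasFDerivAt.comp_hasDerivAt t hline
  simp only [InnerProductSpace.toDual_apply_apply] at hcomp
  exact hcomp

theorem real_inner_sub_le_of_lipschitzWith {F' : H → H} {L : ℝ≥0} (hlip : LipschitzWith L F')
    (x d : H) {t : ℝ} (ht : 0 ≤ t) : ⟪F' (x + t • d) - F' x, d⟫ ≤ L * t * ‖d‖ ^ 2 :=
  calc ⟪F' (x + t • d) - F' x, d⟫ ≤ ‖F' (x + t • d) - F' x‖ * ‖d‖ := real_inner_le_norm _ _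
    _ ≤ L * ‖t • d‖ * ‖d‖ := by
        gcongr
        simpa [dist_eq_norm] using hlip.dist_le_mul (x + t • d) x
    _ = L * t * ‖d‖ ^ 2 := by rw [norm_smul, Real.norm_of_nonneg ht]; ring

theorem le_add_inner_add_of_lipschitzWith_gradient [CompleteSpace H] {F : H → ℝ} {F' : H → H}
    {L : ℝ≥0} (hF : ∀ x, HasGradientAt F (F' x) x) (hlip : LipschitzWith L F') (x y : H) :
    F y ≤ F x + ⟪F' x, y - x⟫ + L / 2 * ‖y - x‖ ^ 2 := by
  set d := y - x
  -- `φ` has derivative `⟪F' (x + t • d) - F' x, d⟫ - L t ‖d‖²`, which is `≤ 0` for `t ≥ 0`.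
  let φ : ℝ → ℝ := fun t => F (x + t • d) - t * ⟪F' x, d⟫ - L / 2 * ‖d‖ ^ 2 * t ^ 2
  have hφ : ∀ t, HasDerivAt φ (⟪F' (x + t • d), d⟫ - ⟪F' x, d⟫ - L * t * ‖d‖ ^ 2) t := by
    intro t
    refine (((hF (x + t • d)).hasDerivAt_add_smul.sub (hasDerivAt_mul_const ⟪F' x, d⟫)).sub
      ((hasDerivAt_pow 2 t).const_mul (L / 2 * ‖d‖ ^ 2))).congr_deriv ?_
    push_cast
    ring
  have hanti : AntitoneOn φ (Set.Ici 0) := by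
    refine antitoneOn_of_hasDerivWithinAt_nonpos (convex_Ici 0)
      (fun t _ => (hφ t).continuousAt.continuousWithinAt) (fun t _ => (hφ t).hasDerivWithinAt)
      fun t ht => ?_
    rw [interior_Ici] at ht
    have := real_inner_sub_le_of_lipschitzWith hlip x d ht.le
    rw [inner_sub_left] at this
    linarith
  have h10 : φ 1 ≤ φ 0 := hanti Set.self_mem_Ici (by norm_num) zero_le_one
  simp only [φ, one_smul, zero_smul, add_zero, d, add_sub_cancel] at h10
  linarith

end

open scoped RealInnerProductSpace in
theorem inexact_projected_gradient_descent_inequality_general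
    {H : Type*} [NormedAddCommGroup H] [InnerProductSpace ℝ H] [CompleteSpace H]
    (F : H → ℝ) (F' : H → H) (hF : ∀ x, HasGradientAt F (F' x) x)
    (β : ℝ) (hβ : 0 < β) (hlip : LipschitzWith β.toNNReal F')
    (K : Set H) (hKconv : Convex ℝ K)
    (x : H) (hx : x ∈ K) (g : H) (xp : H)
    (hproj : IsProjOn K (x - (1 / β) • g) xp) :
    F xp ≤ F x + ‖F' x - g‖ * ‖x - xp‖ - (β / 2) * ‖xp - x‖ ^ 2 := by
  have hdescent := le_add_inner_add_of_lipschitzWith_gradient hF hlip x xp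
  rw [Real.coe_toNNReal _ hβ.le] at hdescent
  have hstep := hproj.real_inner_sub_le_neg_mul_norm_sq hKconv hβ hx
  have herror : ⟪F' x - g, xp - x⟫ ≤ ‖F' x - g‖ * ‖x - xp‖ :=
    norm_sub_rev xp x ▸ real_inner_le_norm _ _
  rw [inner_sub_left] at herror
  linarith

/-- Descent inequality for one inexact projected gradient step: if `∇F` is `β`-Lipschitz,
`x ∈ K`, and `x⁺ = proj_K(x - (1/β) g)`, then
`F(x⁺) ≤ F(x) + ‖∇F(x) - g‖·‖x - x⁺‖ - (β/2)‖x⁺ - x‖²`. -/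
theorem inexact_projected_gradient_descent_inequality
    {H : Type*} [NormedAddCommGroup H] [InnerProductSpace ℝ H] [CompleteSpace H]
    (F : H → ℝ) (F' : H → H) (hF : ∀ x, HasGradientAt F (F' x) x)
    (β : ℝ) (hβ : 0 < β) (hlip : LipschitzWith β.toNNReal F')
    (K : Set H) (hKne : K.Nonempty) (hKc : IsClosed K) (hKconv : Convex ℝ K)
    (x : H) (hx : x ∈ K) (g : H) (xp : H)
    (hproj : IsProjOn K (x - (1 / β) • g) xp) :
    F xp ≤ F x + ‖F' x - g‖ * ‖x - xp‖ - (β / 2) * ‖xp - x‖ ^ 2 :=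
  inexact_projected_gradient_descent_inequality_general F F' hF β hβ hlip K hKconv x hx g xp hproj
end
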